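/- arXiv:2509.07815 — 2 statements merged into one kernel-verified Lean document; each statement's English description precedes it below -/
import Mathlib

section
/- For every m ≥ 1, the matrix C_m = (1/2) I_m + U_m is invertible, and its cosquare C_m^{-T} C_m equals -I_m + 2 Q_m 𝟙_{m×m}, where 𝟙_{m×m} is the all-ones matrix. -/
open Matrix

/-- The m×m strictly upper triangular matrix with all entries 1 above the diagonal. -/
def Umat (m : ℕ) : Matrix (Fin m) (Fin m) ℝ :=
  Matrix.of fun i j => if (i : ℕ) < (j : ℕ) then 1 else 0

/-- The m×m diagonal matrix with alternating diagonal entries (+1,-1,+1,...). -/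
def Qmat (m : ℕ) : Matrix (Fin m) (Fin m) ℝ :=
  Matrix.diagonal fun i => (-1 : ℝ) ^ (i : ℕ)

/-- The all-ones m×m matrix. -/
def Jmat (m : ℕ) : Matrix (Fin m) (Fin m) ℝ :=
  Matrix.of fun _ _ => 1

/-- The second-level signature matrix `C_m = (1/2) I_m + U_m` of the canonical axis path. -/
noncomputable def Cmat (m : ℕ) : Matrix (Fin m) (Fin m) ℝ :=
  (1 / 2 : ℝ) • (1 : Matrix (Fin m) (Fin m) ℝ) + Umat m

lemma Cmat_apply (m : ℕ) (i j : Fin m) :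
    Cmat m i j = (if i = j then (1/2 : ℝ) else 0) + (if (i:ℕ) < (j:ℕ) then 1 else 0) := by
  simp [Cmat, Umat, Matrix.one_apply, Matrix.add_apply]

lemma key_sum (m : ℕ) (i : Fin m) :
    ∑ k : Fin m, Cmat m k i * (-1 : ℝ) ^ (k : ℕ) = 1/2 := by
  simp only [Cmat_apply, add_mul, Finset.sum_add_distrib]
  have h1 : ∑ k : Fin m, (if k = i then (1/2:ℝ) else 0) * (-1:ℝ)^(k:ℕ)
      = (1/2) * (-1)^(i:ℕ) := by
    rw [Finset.sum_eq_single i] <;> simp +contextual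
  have h2 : ∑ k : Fin m, (if (k:ℕ) < (i:ℕ) then (1:ℝ) else 0) * (-1:ℝ)^(k:ℕ)
      = ∑ k ∈ Finset.range (i:ℕ), (-1:ℝ)^k := by
    rw [Fin.sum_univ_eq_sum_range (fun k => (if k < (i:ℕ) then (1:ℝ) else 0) * (-1:ℝ)^k)]
    simp only [ite_mul, one_mul, zero_mul, ← Finset.sum_filter]
    congr 1
    ext k
    simp only [Finset.mem_filter, Finset.mem_range]
    constructor
    · rintro ⟨_, h⟩; exact h
    · intro h; exact ⟨lt_of_lt_of_le h i.2.le, h⟩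
  have h3 : ∑ k ∈ Finset.range (i:ℕ), (-1:ℝ)^k = ((-1:ℝ)^(i:ℕ) - 1) / (-1 - 1) := by
    rw [geom_sum_eq (by norm_num)]
  rw [h1, h2, h3]
  ring

lemma Cmat_det_isUnit (m : ℕ) : IsUnit (Cmat m).det := by
  have ht : (Cmat m).BlockTriangular id := by
    intro i j hij
    simp only [id] at hij
    have hij' : (j:ℕ) < (i:ℕ) := hij
    have h1 : ¬ (i = j) := fun e => by rw [e] at hij'; omega
    have h2 : ¬ ((i:ℕ) < (j:ℕ)) := by omega
    simp [Cmat_apply, h1, h2]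
  rw [Matrix.det_of_upperTriangular ht]
  have hd : ∀ i : Fin m, Cmat m i i = 1/2 := fun i => by simp [Cmat_apply]
  rw [Finset.prod_congr rfl (fun i _ => hd i), Finset.prod_const]
  exact isUnit_iff_ne_zero.mpr (by positivity)

lemma Cmat_mulT (m : ℕ) :
    (Cmat m)ᵀ * (-1 + (2 : ℝ) • (Qmat m * Jmat m)) = Cmat m := by
  ext i j
  rw [Matrix.mul_apply]
  have hX : ∀ k : Fin m, (-1 + (2 : ℝ) • (Qmat m * Jmat m)) k j
      = -(if k = j then (1:ℝ) else 0) + 2 * (-1:ℝ)^(k:ℕ) := by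
    intro k
    simp [Qmat, Jmat, Matrix.add_apply, Matrix.neg_apply, Matrix.one_apply,
      Matrix.diagonal_mul, Matrix.smul_apply]
  simp only [hX, Matrix.transpose_apply, mul_add, Finset.sum_add_distrib]
  have h1 : ∑ k : Fin m, Cmat m k i * -(if k = j then (1:ℝ) else 0) = -(Cmat m j i) := by
    rw [Finset.sum_eq_single j] <;> simp +contextual
  have h2 : ∑ k : Fin m, Cmat m k i * (2 * (-1:ℝ)^(k:ℕ)) = 1 := by
    have hk := key_sum m i
    calc ∑ k : Fin m, Cmat m k i * (2 * (-1:ℝ)^(k:ℕ))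
        = 2 * ∑ k : Fin m, Cmat m k i * (-1:ℝ)^(k:ℕ) := by
          rw [Finset.mul_sum]; congr 1; ext k; ring
      _ = 1 := by rw [hk]; norm_num
  rw [h1, h2]
  simp only [Cmat_apply, Fin.ext_iff]
  split_ifs <;> first | omega | norm_num


/-- For `m ≥ 1`, `C_m` is invertible and its cosquare `C_m⁻ᵀ C_m` equals
`-I_m + 2 Q_m 𝟙_{m×m}`. -/
theorem Cmat_cosquare (m : ℕ) (hm : 1 ≤ m) :
    IsUnit (Cmat m) ∧
      ((Cmat m)ᵀ)⁻¹ * Cmat m = -1 + (2 : ℝ) • (Qmat m * Jmat m) := by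
  have hdet := Cmat_det_isUnit m
  refine ⟨(Matrix.isUnit_iff_isUnit_det _).mpr hdet, ?_⟩
  have hdetT : IsUnit ((Cmat m)ᵀ).det := by rwa [Matrix.det_transpose]
  calc ((Cmat m)ᵀ)⁻¹ * Cmat m
      = ((Cmat m)ᵀ)⁻¹ * ((Cmat m)ᵀ * (-1 + (2:ℝ) • (Qmat m * Jmat m))) := by
        rw [Cmat_mulT m]
    _ = -1 + (2:ℝ) • (Qmat m * Jmat m) := by
        rw [← mul_assoc, Matrix.nonsing_inv_mul _ hdetT, one_mul]
end

section
/- Let α = (α_1,...,α_N) be a composition of m. The skew-symmetric part of W_α, namely (1/(2N)) ⊕_{i=1}^N (U_{α_i} - U_{α_i}^T), has rank m - (number of odd entries of α). -/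
open Matrix Finset

/-- Offset of the i-th block: sum of the sizes of the preceding blocks. -/
def blockOff {N : ℕ} (α : Fin N → ℕ) (i : Fin N) : ℕ :=
  ∑ j ∈ Finset.univ.filter (fun j => j < i), α j

/-- The m×m block diagonal matrix `⊕_{i=1}^N (U_{α_i} - U_{α_i}ᵀ)` (for `m = Σ α_i`):
rows/columns `blockOff α i ≤ r,c < blockOff α i + α i` carry the i-th block
`U_{α_i} - U_{α_i}ᵀ`, whose (p,q) entry is 1 if p < q, -1 if p > q, 0 on the diagonal;
all entries outside the diagonal blocks vanish. -/
def blockSkew {N : ℕ} (α : Fin N → ℕ) (m : ℕ) : Matrix (Fin m) (Fin m) ℝ :=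
  Matrix.of fun r c =>
    if ∃ i : Fin N, blockOff α i ≤ (r : ℕ) ∧ (r : ℕ) < blockOff α i + α i ∧
        blockOff α i ≤ (c : ℕ) ∧ (c : ℕ) < blockOff α i + α i then
      (if (r : ℕ) < (c : ℕ) then 1 else if (c : ℕ) < (r : ℕ) then -1 else 0)
    else 0

/-- `W_α = (1/(2N)) ⊕_i (U_{α_i} - U_{α_i}ᵀ) + (1/(2N²)) 𝟙_{m×m}`. -/
noncomputable def Wmat {N : ℕ} (α : Fin N → ℕ) (m : ℕ) : Matrix (Fin m) (Fin m) ℝ :=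
  (1 / (2 * (N : ℝ))) • blockSkew α m + (1 / (2 * (N : ℝ) ^ 2)) • Jmat m

section Aux

variable {N m : ℕ} (α : Fin N → ℕ)

lemma off_add_le (hm : ∑ i, α i = m) (i : Fin N) : blockOff α i + α i ≤ m := by
  classical
  have h : insert i (Finset.univ.filter (fun j => j < i)) ⊆ Finset.univ := by
    intro x _; exact Finset.mem_univ x
  have hni : i ∉ Finset.univ.filter (fun j => j < i) := by simp
  calc blockOff α i + α i = ∑ j ∈ insert i (Finset.univ.filter (fun j => j < i)), α j := by
        rw [Finset.sum_insert hni, blockOff]; ring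
    _ ≤ ∑ j, α j := Finset.sum_le_sum_of_subset h
    _ = m := hm

lemma off_mono {i j : Fin N} (hij : i < j) : blockOff α i + α i ≤ blockOff α j := by
  classical
  have hni : i ∉ Finset.univ.filter (fun k => k < i) := by simp
  have h : insert i (Finset.univ.filter (fun k => k < i)) ⊆ Finset.univ.filter (fun k => k < j) := by
    intro x hx
    simp only [Finset.mem_insert, Finset.mem_filter, Finset.mem_univ, true_and] at hx ⊢
    rcases hx with rfl | hx
    · exact hij
    · exact hx.trans hij
  calc blockOff α i + α i = ∑ k ∈ insert i (Finset.univ.filter (fun k => k < i)), α k := by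
        rw [Finset.sum_insert hni, blockOff]; ring
    _ ≤ blockOff α j := Finset.sum_le_sum_of_subset h

lemma block_unique {i j : Fin N} {r : ℕ} (hi1 : blockOff α i ≤ r) (hi2 : r < blockOff α i + α i)
    (hj1 : blockOff α j ≤ r) (hj2 : r < blockOff α j + α j) : i = j := by
  rcases lt_trichotomy i j with h | h | h
  · exact absurd ((off_mono α h).trans hj1) (by omega)
  · exact h
  · exact absurd ((off_mono α h).trans hi1) (by omega)

lemma block_exists (hm : ∑ i, α i = m) (hpos : ∀ i, 0 < α i) (r : ℕ) (hr : r < m) :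
    ∃ i : Fin N, blockOff α i ≤ r ∧ r < blockOff α i + α i := by
  classical
  have hN : 0 < N := by
    rcases Nat.eq_zero_or_pos N with h | h
    · subst h; simp at hm; omega
    · exact h
  have h0 : blockOff α ⟨0, hN⟩ = 0 := by
    rw [blockOff]
    apply Finset.sum_eq_zero
    intro j hj
    simp only [Finset.mem_filter] at hj
    exact absurd hj.2 (by simp [Fin.lt_def])
  set s : Finset (Fin N) := Finset.univ.filter (fun i => blockOff α i ≤ r) with hs
  have hne : s.Nonempty := ⟨⟨0, hN⟩, by simp [hs, h0]⟩
  obtain ⟨i, hi, hmax⟩ := s.exists_max_image (fun i => (i : ℕ)) hne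
  simp only [hs, Finset.mem_filter, Finset.mem_univ, true_and] at hi
  refine ⟨i, hi, ?_⟩
  by_contra hcon
  push_neg at hcon
  rcases Nat.lt_or_ge (i.1 + 1) N with hlt | hge
  · set j : Fin N := ⟨i.1 + 1, hlt⟩ with hj
    have hij : i < j := by simp [hj, Fin.lt_def]
    have hoffj : blockOff α j = blockOff α i + α i := by
      have hni : i ∉ Finset.univ.filter (fun k => k < i) := by simp
      have hset : Finset.univ.filter (fun k => k < j) =
          insert i (Finset.univ.filter (fun k => k < i)) := by
        ext x
        simp only [Finset.mem_insert, Finset.mem_filter, Finset.mem_univ, true_and,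
          Fin.lt_def, hj, Fin.ext_iff]
        omega
      rw [blockOff, hset, Finset.sum_insert hni, blockOff]; ring
    have hjs : j ∈ s := by
      simp only [hs, Finset.mem_filter, Finset.mem_univ, true_and]; omega
    have := hmax j hjs
    simp [hj] at this
  · -- i is the last index
    have : blockOff α i + α i = m := by
      have hni : i ∉ Finset.univ.filter (fun k => k < i) := by simp
      have huniv : insert i (Finset.univ.filter (fun k => k < i)) = Finset.univ := by
        ext x
        simp only [Finset.mem_insert, Finset.mem_filter, Finset.mem_univ, true_and, iff_true]
        rcases lt_trichotomy x i with h | h | h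
        · exact Or.inr h
        · exact Or.inl h
        · exact absurd h (by rw [Fin.lt_def]; omega)
      have := Finset.sum_insert (s := Finset.univ.filter (fun k => k < i)) (f := α) hni
      rw [huniv, hm] at this
      rw [blockOff]; omega
    omega


/-- v padded to ℕ by zero. -/
def padv {m : ℕ} (v : Fin m → ℝ) (n : ℕ) : ℝ := if h : n < m then v ⟨n, h⟩ else 0

lemma mulVec_block (hm : ∑ i, α i = m) (v : Fin m → ℝ) (i : Fin N) (r : Fin m)
    (h1 : blockOff α i ≤ (r : ℕ)) (h2 : (r : ℕ) < blockOff α i + α i) :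
    (blockSkew α m *ᵥ v) r = ∑ t ∈ Finset.range (α i),
      (if (r : ℕ) - blockOff α i < t then (1 : ℝ)
        else if t < (r : ℕ) - blockOff α i then -1 else 0) * padv v (blockOff α i + t) := by
  classical
  have hle := off_add_le α hm i
  set G : ℕ → ℝ := fun n =>
    if h : n < m then blockSkew α m r ⟨n, h⟩ * v ⟨n, h⟩ else 0 with hG
  have step1 : (blockSkew α m *ᵥ v) r = ∑ n ∈ Finset.range m, G n := by
    rw [Matrix.mulVec, dotProduct, ← Fin.sum_univ_eq_sum_range]
    refine Finset.sum_congr rfl fun c _ => ?_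
    simp [hG, c.isLt]
  have hsub : Finset.Ico (blockOff α i) (blockOff α i + α i) ⊆ Finset.range m := by
    intro n hn
    simp only [Finset.mem_Ico, Finset.mem_range] at *
    omega
  have step2 : ∑ n ∈ Finset.range m, G n
      = ∑ n ∈ Finset.Ico (blockOff α i) (blockOff α i + α i), G n := by
    refine (Finset.sum_subset hsub fun n hn hn' => ?_).symm
    simp only [Finset.mem_range] at hn
    simp only [Finset.mem_Ico, not_and_or, not_le, not_lt] at hn'
    rw [hG]
    simp only [dif_pos hn]
    have hz : blockSkew α m r ⟨n, hn⟩ = 0 := by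
      rw [blockSkew]
      simp only [Matrix.of_apply]
      rw [if_neg]
      rintro ⟨j, hj1, hj2, hj3, hj4⟩
      have := block_unique α hj1 hj2 h1 h2
      subst this
      omega
    rw [hz, zero_mul]
  have step3 : ∑ n ∈ Finset.Ico (blockOff α i) (blockOff α i + α i), G n
      = ∑ t ∈ Finset.range (α i), G (blockOff α i + t) := by
    rw [Finset.sum_Ico_eq_sum_range, Nat.add_sub_cancel_left]
  rw [step1, step2, step3]
  refine Finset.sum_congr rfl fun t ht => ?_
  simp only [Finset.mem_range] at ht
  have hnm : blockOff α i + t < m := by omega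
  rw [hG]
  simp only [dif_pos hnm]
  have hex : blockSkew α m r ⟨blockOff α i + t, hnm⟩ =
      (if (r : ℕ) < blockOff α i + t then (1 : ℝ)
        else if blockOff α i + t < (r : ℕ) then -1 else 0) := by
    rw [blockSkew]
    simp only [Matrix.of_apply]
    rw [if_pos]
    exact ⟨i, h1, h2, by omega, by omega⟩
  rw [hex, padv]
  rw [dif_pos hnm]
  rcases lt_trichotomy ((r : ℕ) - blockOff α i) t with h | h | h
  · rw [if_pos (by omega), if_pos h]
  · rw [if_neg (by omega), if_neg (by omega), if_neg (by omega), if_neg (by omega)]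
  · rw [if_neg (by omega), if_pos (by omega), if_neg (by omega), if_pos h]

lemma sum_sgn (a p : ℕ) (hp : p < a) (w : ℕ → ℝ) :
    ∑ t ∈ Finset.range a, (if p < t then (1 : ℝ) else if t < p then -1 else 0) * w t
      = (∑ t ∈ Finset.range a, w t - ∑ t ∈ Finset.range (p + 1), w t)
        - ∑ t ∈ Finset.range p, w t := by
  have hterm : ∀ t ∈ Finset.range a,
      (if p < t then (1 : ℝ) else if t < p then -1 else 0) * w t
        = (if p < t then w t else 0) - (if t < p then w t else 0) := by
    intro t _
    rcases lt_trichotomy p t with h | h | h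
    · rw [if_pos h, if_pos h, if_neg (by omega)]; ring
    · rw [if_neg (by omega), if_neg (by omega), if_neg (by omega), if_neg (by omega)]; ring
    · rw [if_neg (by omega), if_pos h, if_neg (by omega), if_pos h]; ring
  rw [Finset.sum_congr rfl hterm, Finset.sum_sub_distrib]
  have e1 : ∑ t ∈ Finset.range a, (if p < t then w t else 0)
      = ∑ t ∈ Finset.range a, w t - ∑ t ∈ Finset.range (p + 1), w t := by
    rw [← Finset.sum_filter]
    have : Finset.filter (fun t => p < t) (Finset.range a) = Finset.Ico (p + 1) a := by
      ext t; simp only [Finset.mem_filter, Finset.mem_range, Finset.mem_Ico]; omega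
    rw [this, Finset.sum_Ico_eq_sub w (by omega)]
  have e2 : ∑ t ∈ Finset.range a, (if t < p then w t else 0)
      = ∑ t ∈ Finset.range p, w t := by
    rw [← Finset.sum_filter]
    have : Finset.filter (fun t => t < p) (Finset.range a) = Finset.range p := by
      ext t; simp only [Finset.mem_filter, Finset.mem_range]; omega
    rw [this]
  rw [e1, e2]

lemma ker_iff (hm : ∑ i, α i = m) (hpos : ∀ i, 0 < α i) (v : Fin m → ℝ) :
    blockSkew α m *ᵥ v = 0 ↔ ∀ i : Fin N,
      (∀ p < α i, padv v (blockOff α i + p) = (-1) ^ p * padv v (blockOff α i)) ∧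
      (Even (α i) → padv v (blockOff α i) = 0) := by
  constructor
  · intro h i
    set a := α i with ha
    set w : ℕ → ℝ := fun t => padv v (blockOff α i + t) with hw
    set S : ℕ → ℝ := fun k => ∑ t ∈ Finset.range k, w t with hS
    have hC : ∀ p < a, S (p + 1) = S a - S p := by
      intro p hp
      have hrm : blockOff α i + p < m := by
        have := off_add_le α hm i; omega
      have h0 : (blockSkew α m *ᵥ v) ⟨blockOff α i + p, hrm⟩ = 0 := by rw [h]; rfl
      rw [mulVec_block α hm v i ⟨blockOff α i + p, hrm⟩ (by simp) (by simp; omega)] at h0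
      simp only [Nat.add_sub_cancel_left] at h0
      rw [sum_sgn a p hp w] at h0
      simp only [hS]
      linarith [h0]
    have hSpar : ∀ k, k ≤ a → S k = if Odd k then S a else 0 := by
      intro k
      induction k with
      | zero => intro _; simp [hS]
      | succ n ih =>
        intro hk
        have hSn := ih (by omega)
        rw [hC n (by omega), hSn]
        rcases Nat.even_or_odd n with he | ho
        · rw [if_neg (by simpa using he), if_pos (by simpa [Nat.odd_add_one] using he)]; ring
        · rw [if_pos ho, if_neg (by simp [Nat.odd_add_one]; exact ho)]; ring
    have h1a : 1 ≤ a := hpos i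
    have hw0T : w 0 = S a := by
      have h1 := hSpar 1 h1a
      have hS1 : S 1 = w 0 := by simp [hS]
      rw [hS1] at h1
      simpa using h1
    refine ⟨fun p hp => ?_, fun hev => ?_⟩
    · show w p = (-1) ^ p * w 0
      have hwp : S (p + 1) = S p + w p := Finset.sum_range_succ w p
      rw [hSpar (p + 1) (by omega), hSpar p (by omega)] at hwp
      rcases Nat.even_or_odd p with he | ho
      · rw [if_pos (by simp [Nat.odd_add_one]; exact he),
          if_neg (by simp [Nat.even_iff, Nat.odd_iff] at he ⊢; omega)] at hwp
        rw [he.neg_one_pow, hw0T]; linarith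
      · rw [if_neg (by simp [Nat.odd_add_one, Nat.even_iff, Nat.odd_iff] at ho ⊢; omega),
          if_pos ho] at hwp
        rw [ho.neg_one_pow, hw0T]; linarith
    · show w 0 = 0
      have hSa := hSpar a le_rfl
      rw [if_neg (by simp [Nat.even_iff, Nat.odd_iff] at hev ⊢; omega)] at hSa
      rw [hw0T, hSa]
  · intro H
    funext r
    simp only [Pi.zero_apply]
    obtain ⟨i, hi1, hi2⟩ := block_exists α hm hpos r r.isLt
    rw [mulVec_block α hm v i r hi1 hi2]
    set p := (r : ℕ) - blockOff α i with hp
    have hpa : p < α i := by omega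
    have hterm : ∀ t ∈ Finset.range (α i),
        (if p < t then (1 : ℝ) else if t < p then -1 else 0) * padv v (blockOff α i + t)
          = ((if p < t then (1 : ℝ) else if t < p then -1 else 0) * (-1) ^ t)
              * padv v (blockOff α i) := by
      intro t ht
      rw [(H i).1 t (Finset.mem_range.mp ht)]
      ring
    rw [Finset.sum_congr rfl hterm]
    rcases Nat.even_or_odd (α i) with he | ho
    · rw [← Finset.sum_mul, (H i).2 he, mul_zero]
    · rw [← Finset.sum_mul]
      have hz : ∑ t ∈ Finset.range (α i),
          (if p < t then (1 : ℝ) else if t < p then -1 else 0) * (-1) ^ t = 0 := by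
        rw [sum_sgn (α i) p hpa (fun t => (-1 : ℝ) ^ t)]
        rw [neg_one_geom_sum, neg_one_geom_sum, neg_one_geom_sum]
        have h1 : ¬ Even (α i) := by simp [Nat.even_iff, Nat.odd_iff] at ho ⊢; omega
        rcases Nat.even_or_odd p with hpe | hpo
        · rw [if_neg h1, if_neg (by simp [Nat.even_add_one, Nat.even_iff] at hpe ⊢; omega),
            if_pos hpe]
          ring
        · rw [if_neg h1, if_pos (by simp [Nat.even_add_one, Nat.even_iff, Nat.odd_iff] at hpo ⊢; omega),
            if_neg (by simp [Nat.even_iff, Nat.odd_iff] at hpo ⊢; omega)]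
          ring
      rw [hz, zero_mul]

lemma finrank_ker_blockSkew (hm : ∑ i, α i = m) (hpos : ∀ i, 0 < α i) :
    Module.finrank ℝ (LinearMap.ker (blockSkew α m).mulVecLin)
      = (Finset.univ.filter fun i => Odd (α i)).card := by
  classical
  have hoff : ∀ j : Fin N, blockOff α j < m := fun j => by
    have h1 := off_add_le α hm j
    have h2 := hpos j
    omega
  set K := LinearMap.ker (blockSkew α m).mulVecLin with hK
  have hker : ∀ v : Fin m → ℝ, v ∈ K ↔ blockSkew α m *ᵥ v = 0 := fun v => by
    rw [hK, LinearMap.mem_ker, Matrix.mulVecLin_apply]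
  let E : (Fin m → ℝ) →ₗ[ℝ] ({i : Fin N // Odd (α i)} → ℝ) :=
    { toFun := fun v j => v ⟨blockOff α j.1, hoff j.1⟩
      map_add' := fun x y => rfl
      map_smul' := fun c x => rfl }
  let e : K →ₗ[ℝ] ({i : Fin N // Odd (α i)} → ℝ) := E.comp K.subtype
  have he : ∀ (z : K) (j : {i : Fin N // Odd (α i)}),
      e z j = z.1 ⟨blockOff α j.1, hoff j.1⟩ := fun z j => rfl
  have hval : ∀ z : K, ∀ (i : Fin N) (p : ℕ), p < α i →
      ∀ (hrm : blockOff α i + p < m),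
      z.1 ⟨blockOff α i + p, hrm⟩ = (-1 : ℝ) ^ p * z.1 ⟨blockOff α i, hoff i⟩ := by
    intro z i p hpa hrm
    have hz := (ker_iff α hm hpos z.1).mp ((hker z.1).mp z.2)
    have h1 := (hz i).1 p hpa
    rw [padv, padv, dif_pos hrm, dif_pos (hoff i)] at h1
    exact h1
  have hval0 : ∀ z : K, ∀ i : Fin N, ¬ Odd (α i) → z.1 ⟨blockOff α i, hoff i⟩ = 0 := by
    intro z i ho
    have hz := (ker_iff α hm hpos z.1).mp ((hker z.1).mp z.2)
    have h2 := (hz i).2 (Nat.not_odd_iff_even.mp ho)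
    rw [padv, dif_pos (hoff i)] at h2
    exact h2
  have hbij : Function.Bijective e := by
    constructor
    · -- injective
      intro x y hxy
      ext r
      obtain ⟨i, hi1, hi2⟩ := block_exists α hm hpos r r.isLt
      have hrm : blockOff α i + ((r : ℕ) - blockOff α i) < m := by omega
      have hre : r = (⟨blockOff α i + ((r : ℕ) - blockOff α i), hrm⟩ : Fin m) := by
        apply Fin.ext; simp; omega
      rw [hre, hval x i _ (by omega) hrm, hval y i _ (by omega) hrm]
      by_cases ho : Odd (α i)
      · have := congrFun hxy ⟨i, ho⟩
        rw [he x ⟨i, ho⟩, he y ⟨i, ho⟩] at this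
        rw [this]
      · rw [hval0 x i ho, hval0 y i ho]
    · -- surjective
      intro x
      set v : Fin m → ℝ := fun r => ∑ j : {i : Fin N // Odd (α i)},
        if blockOff α j.1 ≤ (r : ℕ) ∧ (r : ℕ) < blockOff α j.1 + α j.1 then
          (-1 : ℝ) ^ ((r : ℕ) - blockOff α j.1) * x j else 0 with hv
      have heval : ∀ (r : Fin m) (i : Fin N), blockOff α i ≤ (r : ℕ) →
          (r : ℕ) < blockOff α i + α i →
          v r = if h : Odd (α i) then (-1 : ℝ) ^ ((r : ℕ) - blockOff α i) * x ⟨i, h⟩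
            else 0 := by
        intro r i hi1 hi2
        by_cases ho : Odd (α i)
        · rw [dif_pos ho, hv]
          beta_reduce
          rw [Finset.sum_eq_single (⟨i, ho⟩ : {i : Fin N // Odd (α i)})
            (fun j _ hj => by
              rw [if_neg]
              rintro ⟨hj1, hj2⟩
              exact hj (Subtype.ext (block_unique α hj1 hj2 hi1 hi2)))
            (fun h => absurd (Finset.mem_univ _) h)]
          rw [if_pos ⟨hi1, hi2⟩]
        · rw [dif_neg ho, hv]
          beta_reduce
          refine Finset.sum_eq_zero fun j _ => ?_
          rw [if_neg]
          rintro ⟨hj1, hj2⟩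
          exact ho ((block_unique α hj1 hj2 hi1 hi2) ▸ j.2)
      have hpadv : ∀ (i : Fin N) (p : ℕ), p < α i →
          padv v (blockOff α i + p)
            = if h : Odd (α i) then (-1 : ℝ) ^ p * x ⟨i, h⟩ else 0 := by
        intro i p hp
        have hrm : blockOff α i + p < m := by
          have := off_add_le α hm i; omega
        rw [padv, dif_pos hrm]
        rw [heval ⟨blockOff α i + p, hrm⟩ i (by simp) (by simp; omega)]
        congr 1
        · ext h; congr 1; simp
      have hvK : v ∈ K := by
        rw [hker, ker_iff α hm hpos]
        intro i
        have hp0 := hpadv i 0 (hpos i)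
        rw [Nat.add_zero] at hp0
        constructor
        · intro p hp
          rw [hpadv i p hp, hp0]
          by_cases ho : Odd (α i)
          · rw [dif_pos ho, dif_pos ho]; ring_nf
          · rw [dif_neg ho, dif_neg ho]; ring
        · intro hev
          rw [hp0, dif_neg (by simp [Nat.even_iff, Nat.odd_iff] at hev ⊢; omega)]
      refine ⟨⟨v, hvK⟩, ?_⟩
      funext j
      rw [he ⟨v, hvK⟩ j]
      show v ⟨blockOff α j.1, hoff j.1⟩ = x j
      have := hpadv j.1 0 (hpos j.1)
      rw [Nat.add_zero, padv, dif_pos (hoff j.1)] at this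
      rw [this, dif_pos j.2, pow_zero, one_mul]
  have := LinearEquiv.finrank_eq (LinearEquiv.ofBijective e hbij)
  rw [this]
  rw [Module.finrank_pi ℝ]
  exact Fintype.card_subtype _

theorem Wmat_skew_rank_aux (N m : ℕ) (hN : 0 < N) (α : Fin N → ℕ)
    (hpos : ∀ i, 0 < α i) (hm : ∑ i, α i = m) :
    ((1 / (2 * (N : ℝ))) • blockSkew α m).rank
      = m - (Finset.univ.filter fun i => Odd (α i)).card := by
  have hc : (1 / (2 * (N : ℝ))) ≠ 0 := by
    apply one_div_ne_zero
    have : (0 : ℝ) < N := by exact_mod_cast hN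
    positivity
  have h1 : ((1 / (2 * (N : ℝ))) • blockSkew α m).mulVecLin
      = (1 / (2 * (N : ℝ))) • (blockSkew α m).mulVecLin := by
    apply LinearMap.ext; intro v
    simp [Matrix.mulVecLin_apply, Matrix.smul_mulVec]
  rw [Matrix.rank, h1, LinearMap.range_smul _ _ hc]
  have h2 := LinearMap.finrank_range_add_finrank_ker (blockSkew α m).mulVecLin
  rw [finrank_ker_blockSkew α hm hpos] at h2
  have h3 : Module.finrank ℝ (Fin m → ℝ) = m := by simp
  rw [h3] at h2
  omega

end Aux

/-- For a composition `α` of `m`, the skew-symmetric part of `W_α`, namely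
`(1/(2N)) ⊕_i (U_{α_i} - U_{α_i}ᵀ)`, has rank `m - #{i : α_i odd}`. -/
theorem Wmat_skew_rank (N m : ℕ) (hN : 0 < N) (α : Fin N → ℕ)
    (hpos : ∀ i, 0 < α i) (hm : ∑ i, α i = m) :
    ((1 / (2 * (N : ℝ))) • blockSkew α m).rank
      = m - (Finset.univ.filter fun i => Odd (α i)).card :=
  Wmat_skew_rank_aux N m hN α hpos hm
end
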